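/- Let μ : (0,∞) → (0,∞) be C¹ and let φ satisfy φ'(s) = μ'(s)/s. Suppose ρ : ℝ × ℝ^d → (0,∞) is smooth, u : ℝ × ℝ^d → ℝ^d is smooth, and ∂ₜρ + div(ρu) = 0. Then ρ-weighted gradient of φ(ρ) satisfies: ∂ₜ(ρ∇φ(ρ)) + div(ρ u ⊗ ∇φ(ρ)) + div(μ(ρ)∇ᵀu) + ∇((μ'(ρ)ρ − μ(ρ)) div u) = 0, where (∇ᵀu)_{ij} = ∂_i u_j and (u ⊗ v)_{ij} = u_i v_j. -/

import Mathlib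

noncomputable def pd {d : ℕ} (i : Fin d) (f : (Fin d → ℝ) → ℝ) (x : Fin d → ℝ) : ℝ :=
  fderiv ℝ f x (Pi.single i 1)

section Aux

variable {E : Type*} [NormedAddCommGroup E] [NormedSpace ℝ E]

lemma dd_diff {f : E → ℝ} {x : E} (hf : ContDiffAt ℝ 2 f x) (v : E) :
    DifferentiableAt ℝ (fun y => fderiv ℝ f y v) x :=
  ((hf.fderiv_right (m := 1) (le_refl 2)).differentiableAt one_ne_zero).clm_apply (differentiableAt_const v)

lemma dswap {f : E → ℝ} {x : E} (hf : ContDiffAt ℝ 2 f x) (v w : E) :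
    fderiv ℝ (fun y => fderiv ℝ f y v) x w = fderiv ℝ (fun y => fderiv ℝ f y w) x v := by
  have hd : DifferentiableAt ℝ (fderiv ℝ f) x :=
    (hf.fderiv_right (m := 1) (le_refl 2)).differentiableAt one_ne_zero
  have h1 : ∀ a : E, fderiv ℝ (fun y => fderiv ℝ f y a) x
      = (ContinuousLinearMap.apply ℝ ℝ a).comp (fderiv ℝ (fderiv ℝ f) x) := fun a =>
    ((ContinuousLinearMap.apply ℝ ℝ a).hasFDerivAt.comp x hd.hasFDerivAt).fderiv
  rw [h1, h1]
  exact (hf.isSymmSndFDerivAt (by simp [minSmoothness_of_isRCLikeNormedField])) w v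

lemma pd_slice {d : ℕ} {f : ℝ × (Fin d → ℝ) → ℝ} {t : ℝ} {x : Fin d → ℝ}
    (hf : DifferentiableAt ℝ f (t, x)) (i : Fin d) :
    pd i (fun y => f (t, y)) x = fderiv ℝ f (t, x) (0, Pi.single i 1) := by
  have h : HasFDerivAt (fun y => f (t, y))
      ((fderiv ℝ f (t, x)).comp (ContinuousLinearMap.inr ℝ ℝ (Fin d → ℝ))) x :=
    hf.hasFDerivAt.comp x (hasFDerivAt_prodMk_right t x)
  rw [pd, h.fderiv]; rfl

lemma deriv_slice {d : ℕ} {f : ℝ × (Fin d → ℝ) → ℝ} {t : ℝ} {x : Fin d → ℝ}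
    (hf : DifferentiableAt ℝ f (t, x)) :
    deriv (fun s => f (s, x)) t = fderiv ℝ f (t, x) (1, 0) := by
  have h : HasDerivAt (fun s => f (s, x))
      (((fderiv ℝ f (t, x)).comp (ContinuousLinearMap.inl ℝ ℝ (Fin d → ℝ))) 1) t :=
    (hf.hasFDerivAt.comp t (hasFDerivAt_prodMk_left t x)).hasDerivAt
  rw [h.deriv]; rfl

/-- Abstract core: gradient of the renormalized continuity equation. -/
lemma key {Q : Type*} [NormedAddCommGroup Q] [NormedSpace ℝ Q] {d : ℕ}
    (R m M : Q → ℝ) (U : Fin d → Q → ℝ) (e0 : Q) (e : Fin d → Q)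
    (hRd : ∀ p, DifferentiableAt ℝ R p)
    (hU : ∀ i p, ContDiffAt ℝ 2 (U i) p)
    (hM : ∀ p, ContDiffAt ℝ 2 M p)
    (hm : ∀ p, DifferentiableAt ℝ m p)
    (hM' : ∀ p v, fderiv ℝ M p v = m p * fderiv ℝ R p v)
    (hcont : ∀ p, fderiv ℝ R p e0 + ∑ i, fderiv ℝ (fun q => R q * U i q) p (e i) = 0)
    (p : Q) (j : Fin d) :
    fderiv ℝ (fun q => fderiv ℝ M q (e j)) p e0
      + ∑ i, fderiv ℝ (fun q => fderiv ℝ (fun r => M r * U i r) q (e j)) p (e i)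
      + fderiv ℝ (fun q => (m q * R q - M q) * ∑ i, fderiv ℝ (U i) q (e i)) p (e j) = 0 := by
  have hMd : ∀ q, DifferentiableAt ℝ M q := fun q => (hM q).differentiableAt two_ne_zero
  have hUd : ∀ i q, DifferentiableAt ℝ (U i) q := fun i q => (hU i q).differentiableAt two_ne_zero
  have hMU : ∀ i q, ContDiffAt ℝ 2 (fun r => M r * U i r) q := fun i q => (hM q).mul (hU i q)
  rw [dswap (hM p) (e j) e0]
  rw [Finset.sum_congr rfl (fun i _ => dswap (hMU i p) (e j) (e i))]
  have hd1 : ∀ q, DifferentiableAt ℝ (fun r => fderiv ℝ M r e0) q := fun q => dd_diff (hM q) e0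
  have hd2 : ∀ i q, DifferentiableAt ℝ (fun r => fderiv ℝ (fun s => M s * U i s) r (e i)) q :=
    fun i q => dd_diff (hMU i q) (e i)
  have hd2s : ∀ q, DifferentiableAt ℝ
      (fun r => ∑ i, fderiv ℝ (fun s => M s * U i s) r (e i)) q :=
    fun q => DifferentiableAt.fun_sum (fun i _ => hd2 i q)
  have hSd : ∀ q, DifferentiableAt ℝ (fun r => ∑ i, fderiv ℝ (U i) r (e i)) q :=
    fun q => DifferentiableAt.fun_sum fun i _ => dd_diff (hU i q) (e i)
  have hCd : ∀ q, DifferentiableAt ℝ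
      (fun r => (m r * R r - M r) * ∑ i, fderiv ℝ (U i) r (e i)) q :=
    fun q => (((hm q).mul (hRd q)).sub (hMd q)).mul (hSd q)
  have hzero : (fun q => fderiv ℝ M q e0 + ∑ i, fderiv ℝ (fun r => M r * U i r) q (e i)
      + (m q * R q - M q) * ∑ i, fderiv ℝ (U i) q (e i)) = fun _ => (0:ℝ) := by
    funext q
    have hc := hcont q
    have hmul : ∀ i, fderiv ℝ (fun r => R r * U i r) q (e i)
        = R q * fderiv ℝ (U i) q (e i) + U i q * fderiv ℝ R q (e i) := fun i => by
      rw [fderiv_fun_mul (hRd q) (hUd i q)]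
      simp [smul_eq_mul]
    have hMUv : ∀ i, fderiv ℝ (fun r => M r * U i r) q (e i)
        = M q * fderiv ℝ (U i) q (e i) + U i q * (m q * fderiv ℝ R q (e i)) := fun i => by
      rw [fderiv_fun_mul (hMd q) (hUd i q)]
      simp [smul_eq_mul, hM']
    rw [Finset.sum_congr rfl (fun i _ => hmul i)] at hc
    rw [Finset.sum_congr rfl (fun i _ => hMUv i), hM' q e0]
    rw [Finset.sum_add_distrib] at hc
    rw [Finset.sum_add_distrib]
    rw [← Finset.mul_sum] at hc
    rw [← Finset.mul_sum]
    have hcm : ∑ i, U i q * (m q * fderiv ℝ R q (e i))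
        = m q * ∑ i, U i q * fderiv ℝ R q (e i) := by
      rw [Finset.mul_sum]; exact Finset.sum_congr rfl fun i _ => by ring
    rw [hcm]
    linear_combination (m q) * hc
  have h4 : fderiv ℝ (fun q => fderiv ℝ M q e0) p (e j)
      + ∑ i, fderiv ℝ (fun q => fderiv ℝ (fun r => M r * U i r) q (e i)) p (e j)
      + fderiv ℝ (fun q => (m q * R q - M q) * ∑ i, fderiv ℝ (U i) q (e i)) p (e j)
      = fderiv ℝ (fun q => fderiv ℝ M q e0 + ∑ i, fderiv ℝ (fun r => M r * U i r) q (e i)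
          + (m q * R q - M q) * ∑ i, fderiv ℝ (U i) q (e i)) p (e j) := by
    rw [fderiv_fun_add ((hd1 p).fun_add (hd2s p)) (hCd p), fderiv_fun_add (hd1 p) (hd2s p),
      fderiv_fun_sum (fun i _ => hd2 i p)]
    simp
  rw [h4, hzero]
  simp
/-- Equation (2.7) of the paper: if `μ` is `C¹` (indeed `C²`) with `φ'(s) = μ'(s)/s`, and smooth
`ρ > 0`, `u` satisfy the continuity equation `∂ₜρ + div(ρu) = 0`, then for every component `j`,
`∂ₜ(ρ∂ⱼφ(ρ)) + div(ρ u ∂ⱼφ(ρ)) + div(μ(ρ)∇ᵀu)ⱼ + ∂ⱼ((μ'(ρ)ρ − μ(ρ)) div u) = 0`. -/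
theorem stmt5 (d : ℕ) (μ μ' φ : ℝ → ℝ)
    (hμ : ∀ s > (0 : ℝ), HasDerivAt μ (μ' s) s)
    (hμpos : ∀ s > (0 : ℝ), 0 < μ s)
    (hμC : ContDiffOn ℝ 2 μ (Set.Ioi 0))
    (hφ : ∀ s > (0 : ℝ), HasDerivAt φ (μ' s / s) s)
    (hφC : ContDiffOn ℝ 2 φ (Set.Ioi 0))
    (ρ : ℝ → (Fin d → ℝ) → ℝ) (u : ℝ → (Fin d → ℝ) → Fin d → ℝ)
    (hρpos : ∀ t x, 0 < ρ t x)
    (hρC : ContDiff ℝ (⊤ : ℕ∞) (fun p : ℝ × (Fin d → ℝ) => ρ p.1 p.2))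
    (huC : ContDiff ℝ (⊤ : ℕ∞) (fun p : ℝ × (Fin d → ℝ) => u p.1 p.2))
    (hcont : ∀ t x, deriv (fun s => ρ s x) t
      + ∑ i, pd i (fun y => ρ t y * u t y i) x = 0) :
    ∀ t x (j : Fin d),
      deriv (fun s => ρ s x * pd j (fun y => φ (ρ s y)) x) t
        + ∑ i, pd i (fun y => ρ t y * u t y i * pd j (fun z => φ (ρ t z)) y) x
        + ∑ i, pd i (fun y => μ (ρ t y) * pd j (fun z => u t z i) y) x
        + pd j (fun y => (μ' (ρ t y) * ρ t y - μ (ρ t y))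
            * ∑ i, pd i (fun z => u t z i) y) x = 0 := by
  intro t x j
  have hRc : ContDiff ℝ 2 (fun q : ℝ × (Fin d → ℝ) => ρ q.1 q.2) := hρC.of_le (WithTop.coe_le_coe.mpr le_top)
  have hRd : ∀ p : ℝ × (Fin d → ℝ),
      DifferentiableAt ℝ (fun q : ℝ × (Fin d → ℝ) => ρ q.1 q.2) p :=
    fun p => (hRc.differentiable two_ne_zero).differentiableAt
  have hUc : ∀ i, ContDiff ℝ 2 (fun q : ℝ × (Fin d → ℝ) => u q.1 q.2 i) :=
    fun i => (contDiff_pi.mp huC i).of_le (WithTop.coe_le_coe.mpr le_top)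
  have hU2 : ∀ i (p : ℝ × (Fin d → ℝ)),
      ContDiffAt ℝ 2 (fun q : ℝ × (Fin d → ℝ) => u q.1 q.2 i) p :=
    fun i p => (hUc i).contDiffAt
  have hUd : ∀ i (p : ℝ × (Fin d → ℝ)),
      DifferentiableAt ℝ (fun q : ℝ × (Fin d → ℝ) => u q.1 q.2 i) p :=
    fun i p => (hU2 i p).differentiableAt two_ne_zero
  have hM2 : ∀ p : ℝ × (Fin d → ℝ),
      ContDiffAt ℝ 2 (fun q : ℝ × (Fin d → ℝ) => μ (ρ q.1 q.2)) p :=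
    fun p => (hμC.contDiffAt (Ioi_mem_nhds (hρpos p.1 p.2))).comp p hRc.contDiffAt
  have hF2 : ∀ p : ℝ × (Fin d → ℝ),
      ContDiffAt ℝ 2 (fun q : ℝ × (Fin d → ℝ) => φ (ρ q.1 q.2)) p :=
    fun p => (hφC.contDiffAt (Ioi_mem_nhds (hρpos p.1 p.2))).comp p hRc.contDiffAt
  have hMd : ∀ p : ℝ × (Fin d → ℝ),
      DifferentiableAt ℝ (fun q : ℝ × (Fin d → ℝ) => μ (ρ q.1 q.2)) p :=
    fun p => (hM2 p).differentiableAt two_ne_zero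
  have hFd : ∀ p : ℝ × (Fin d → ℝ),
      DifferentiableAt ℝ (fun q : ℝ × (Fin d → ℝ) => φ (ρ q.1 q.2)) p :=
    fun p => (hF2 p).differentiableAt two_ne_zero
  have hMv : ∀ (p : ℝ × (Fin d → ℝ)) (v : ℝ × (Fin d → ℝ)),
      fderiv ℝ (fun q : ℝ × (Fin d → ℝ) => μ (ρ q.1 q.2)) p v
        = μ' (ρ p.1 p.2) * fderiv ℝ (fun q : ℝ × (Fin d → ℝ) => ρ q.1 q.2) p v := by
    intro p v
    have h : HasFDerivAt (fun q : ℝ × (Fin d → ℝ) => μ (ρ q.1 q.2))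
        (μ' (ρ p.1 p.2) • fderiv ℝ (fun q : ℝ × (Fin d → ℝ) => ρ q.1 q.2) p) p :=
      (hμ _ (hρpos p.1 p.2)).comp_hasFDerivAt p (hRd p).hasFDerivAt
    rw [h.fderiv]; simp
  have hFv : ∀ (p : ℝ × (Fin d → ℝ)) (v : ℝ × (Fin d → ℝ)),
      fderiv ℝ (fun q : ℝ × (Fin d → ℝ) => φ (ρ q.1 q.2)) p v
        = (μ' (ρ p.1 p.2) / ρ p.1 p.2)
          * fderiv ℝ (fun q : ℝ × (Fin d → ℝ) => ρ q.1 q.2) p v := by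
    intro p v
    have h : HasFDerivAt (fun q : ℝ × (Fin d → ℝ) => φ (ρ q.1 q.2))
        ((μ' (ρ p.1 p.2) / ρ p.1 p.2)
          • fderiv ℝ (fun q : ℝ × (Fin d → ℝ) => ρ q.1 q.2) p) p :=
      (hφ _ (hρpos p.1 p.2)).comp_hasFDerivAt p (hRd p).hasFDerivAt
    rw [h.fderiv]; simp
  have hmd : ∀ p : ℝ × (Fin d → ℝ),
      DifferentiableAt ℝ (fun q : ℝ × (Fin d → ℝ) => μ' (ρ q.1 q.2)) p := by
    have hkey : (fun q : ℝ × (Fin d → ℝ) => μ' (ρ q.1 q.2))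
        = (fun q : ℝ × (Fin d → ℝ) => deriv μ (ρ q.1 q.2)) :=
      funext fun q => ((hμ _ (hρpos q.1 q.2)).deriv).symm
    rw [hkey]
    intro p
    have h1 : ContDiffOn ℝ 1 (deriv μ) (Set.Ioi 0) :=
      hμC.deriv_of_isOpen isOpen_Ioi (by norm_num)
    exact ((h1.contDiffAt (Ioi_mem_nhds (hρpos p.1 p.2))).differentiableAt one_ne_zero).comp
      p (hRd p)
  have hcontP : ∀ p : ℝ × (Fin d → ℝ),
      fderiv ℝ (fun q : ℝ × (Fin d → ℝ) => ρ q.1 q.2) p (1, 0)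
        + ∑ i, fderiv ℝ (fun q : ℝ × (Fin d → ℝ) => ρ q.1 q.2 * u q.1 q.2 i) p
            (0, Pi.single i 1) = 0 := by
    intro p
    have h := hcont p.1 p.2
    have h1 : deriv (fun s => ρ s p.2) p.1
        = fderiv ℝ (fun q : ℝ × (Fin d → ℝ) => ρ q.1 q.2) (p.1, p.2) (1, 0) :=
      deriv_slice (hRd _)
    have h2 : ∀ i, pd i (fun y => ρ p.1 y * u p.1 y i) p.2
        = fderiv ℝ (fun q : ℝ × (Fin d → ℝ) => ρ q.1 q.2 * u q.1 q.2 i) (p.1, p.2)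
            (0, Pi.single i 1) :=
      fun i => pd_slice ((hRd _).mul (hUd i _)) i
    rw [h1, Finset.sum_congr rfl (fun i _ => h2 i)] at h
    exact h
  -- Term 1
  have hT1 : deriv (fun s => ρ s x * pd j (fun y => φ (ρ s y)) x) t
      = fderiv ℝ (fun q : ℝ × (Fin d → ℝ) =>
          fderiv ℝ (fun r : ℝ × (Fin d → ℝ) => μ (ρ r.1 r.2)) q (0, Pi.single j 1))
          (t, x) (1, 0) := by
    have h1 : (fun s => ρ s x * pd j (fun y => φ (ρ s y)) x)
        = (fun s => fderiv ℝ (fun r : ℝ × (Fin d → ℝ) => μ (ρ r.1 r.2)) (s, x)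
            (0, Pi.single j 1)) := by
      funext s
      have h2 : pd j (fun y => φ (ρ s y)) x
          = fderiv ℝ (fun q : ℝ × (Fin d → ℝ) => φ (ρ q.1 q.2)) (s, x)
              (0, Pi.single j 1) := pd_slice (hFd (s, x)) j
      rw [h2, hFv (s, x), hMv (s, x)]
      have hne : ρ s x ≠ 0 := (hρpos s x).ne'
      simp only
      field_simp
    rw [h1]
    exact deriv_slice (f := fun q : ℝ × (Fin d → ℝ) =>
      fderiv ℝ (fun r : ℝ × (Fin d → ℝ) => μ (ρ r.1 r.2)) q (0, Pi.single j 1))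
      (dd_diff (hM2 (t, x)) _)
  -- Term 2
  have hT2 : ∀ i, pd i (fun y => ρ t y * u t y i * pd j (fun z => φ (ρ t z)) y) x
      = fderiv ℝ (fun q : ℝ × (Fin d → ℝ) => u q.1 q.2 i
          * fderiv ℝ (fun r : ℝ × (Fin d → ℝ) => μ (ρ r.1 r.2)) q (0, Pi.single j 1))
          (t, x) (0, Pi.single i 1) := by
    intro i
    have h1 : (fun y => ρ t y * u t y i * pd j (fun z => φ (ρ t z)) y)
        = (fun y => u t y i
            * fderiv ℝ (fun r : ℝ × (Fin d → ℝ) => μ (ρ r.1 r.2)) (t, y)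
              (0, Pi.single j 1)) := by
      funext y
      have h2 : pd j (fun z => φ (ρ t z)) y
          = fderiv ℝ (fun q : ℝ × (Fin d → ℝ) => φ (ρ q.1 q.2)) (t, y)
              (0, Pi.single j 1) := pd_slice (hFd (t, y)) j
      rw [h2, hFv (t, y), hMv (t, y)]
      have hne : ρ t y ≠ 0 := (hρpos t y).ne'
      simp only
      field_simp
    rw [h1]
    exact pd_slice (f := fun q : ℝ × (Fin d → ℝ) => u q.1 q.2 i
      * fderiv ℝ (fun r : ℝ × (Fin d → ℝ) => μ (ρ r.1 r.2)) q (0, Pi.single j 1))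
      ((hUd i _).mul (dd_diff (hM2 (t, x)) _)) i
  -- Term 3
  have hT3 : ∀ i, pd i (fun y => μ (ρ t y) * pd j (fun z => u t z i) y) x
      = fderiv ℝ (fun q : ℝ × (Fin d → ℝ) => μ (ρ q.1 q.2)
          * fderiv ℝ (fun r : ℝ × (Fin d → ℝ) => u r.1 r.2 i) q (0, Pi.single j 1))
          (t, x) (0, Pi.single i 1) := by
    intro i
    have h1 : (fun y => μ (ρ t y) * pd j (fun z => u t z i) y)
        = (fun y => μ (ρ t y)
            * fderiv ℝ (fun r : ℝ × (Fin d → ℝ) => u r.1 r.2 i) (t, y)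
              (0, Pi.single j 1)) := by
      funext y
      have h2 : pd j (fun z => u t z i) y
          = fderiv ℝ (fun q : ℝ × (Fin d → ℝ) => u q.1 q.2 i) (t, y)
              (0, Pi.single j 1) := pd_slice (hUd i (t, y)) j
      rw [h2]
    rw [h1]
    exact pd_slice (f := fun q : ℝ × (Fin d → ℝ) => μ (ρ q.1 q.2)
      * fderiv ℝ (fun r : ℝ × (Fin d → ℝ) => u r.1 r.2 i) q (0, Pi.single j 1))
      ((hMd _).mul (dd_diff (hU2 i (t, x)) _)) i
  -- Term 4
  have hT4 : pd j (fun y => (μ' (ρ t y) * ρ t y - μ (ρ t y))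
        * ∑ i, pd i (fun z => u t z i) y) x
      = fderiv ℝ (fun q : ℝ × (Fin d → ℝ) =>
          (μ' (ρ q.1 q.2) * ρ q.1 q.2 - μ (ρ q.1 q.2))
          * ∑ i, fderiv ℝ (fun r : ℝ × (Fin d → ℝ) => u r.1 r.2 i) q (0, Pi.single i 1))
          (t, x) (0, Pi.single j 1) := by
    have h1 : (fun y => (μ' (ρ t y) * ρ t y - μ (ρ t y))
          * ∑ i, pd i (fun z => u t z i) y)
        = (fun y => (μ' (ρ t y) * ρ t y - μ (ρ t y))
            * ∑ i, fderiv ℝ (fun r : ℝ × (Fin d → ℝ) => u r.1 r.2 i) (t, y)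
                (0, Pi.single i 1)) := by
      funext y
      congr 1
      exact Finset.sum_congr rfl fun i _ =>
        (show pd i (fun z => u t z i) y
          = fderiv ℝ (fun q : ℝ × (Fin d → ℝ) => u q.1 q.2 i) (t, y) (0, Pi.single i 1)
          from pd_slice (hUd i (t, y)) i)
    rw [h1]
    exact pd_slice (f := fun q : ℝ × (Fin d → ℝ) =>
        (μ' (ρ q.1 q.2) * ρ q.1 q.2 - μ (ρ q.1 q.2))
        * ∑ i, fderiv ℝ (fun r : ℝ × (Fin d → ℝ) => u r.1 r.2 i) q (0, Pi.single i 1))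
      ((((hmd _).mul (hRd _)).sub (hMd _)).mul
        (DifferentiableAt.fun_sum fun i _ => dd_diff (hU2 i (t, x)) _)) j
  rw [hT1, Finset.sum_congr rfl (fun i _ => hT2 i),
    Finset.sum_congr rfl (fun i _ => hT3 i), hT4]
  -- combine terms 2 and 3
  have hMUv : ∀ i (q : ℝ × (Fin d → ℝ)),
      fderiv ℝ (fun r : ℝ × (Fin d → ℝ) => μ (ρ r.1 r.2) * u r.1 r.2 i) q (0, Pi.single j 1)
        = u q.1 q.2 i * fderiv ℝ (fun r : ℝ × (Fin d → ℝ) => μ (ρ r.1 r.2)) q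
              (0, Pi.single j 1)
          + μ (ρ q.1 q.2) * fderiv ℝ (fun r : ℝ × (Fin d → ℝ) => u r.1 r.2 i) q
              (0, Pi.single j 1) := by
    intro i q
    rw [fderiv_fun_mul (hMd q) (hUd i q)]
    simp [smul_eq_mul]
    ring
  have hcomb : ∀ i,
      fderiv ℝ (fun q : ℝ × (Fin d → ℝ) => u q.1 q.2 i
          * fderiv ℝ (fun r : ℝ × (Fin d → ℝ) => μ (ρ r.1 r.2)) q (0, Pi.single j 1))
          (t, x) (0, Pi.single i 1)
        + fderiv ℝ (fun q : ℝ × (Fin d → ℝ) => μ (ρ q.1 q.2)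
            * fderiv ℝ (fun r : ℝ × (Fin d → ℝ) => u r.1 r.2 i) q (0, Pi.single j 1))
            (t, x) (0, Pi.single i 1)
        = fderiv ℝ (fun q : ℝ × (Fin d → ℝ) =>
            fderiv ℝ (fun r : ℝ × (Fin d → ℝ) => μ (ρ r.1 r.2) * u r.1 r.2 i) q
              (0, Pi.single j 1)) (t, x) (0, Pi.single i 1) := by
    intro i
    have h1 : (fun q : ℝ × (Fin d → ℝ) =>
        fderiv ℝ (fun r : ℝ × (Fin d → ℝ) => μ (ρ r.1 r.2) * u r.1 r.2 i) q
          (0, Pi.single j 1))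
        = (fun q : ℝ × (Fin d → ℝ) => u q.1 q.2 i
            * fderiv ℝ (fun r : ℝ × (Fin d → ℝ) => μ (ρ r.1 r.2)) q (0, Pi.single j 1)
          + μ (ρ q.1 q.2)
            * fderiv ℝ (fun r : ℝ × (Fin d → ℝ) => u r.1 r.2 i) q (0, Pi.single j 1)) :=
      funext fun q => hMUv i q
    rw [h1, fderiv_fun_add ((hUd i _).fun_mul (dd_diff (hM2 (t, x)) _))
      ((hMd _).fun_mul (dd_diff (hU2 i (t, x)) _))]
    simp
  rw [add_assoc
    (fderiv ℝ (fun q : ℝ × (Fin d → ℝ) =>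
        fderiv ℝ (fun r : ℝ × (Fin d → ℝ) => μ (ρ r.1 r.2)) q (0, Pi.single j 1))
        (t, x) (1, 0)),
    ← Finset.sum_add_distrib,
    Finset.sum_congr rfl (fun i _ => hcomb i)]
  exact key (fun q : ℝ × (Fin d → ℝ) => ρ q.1 q.2)
    (fun q : ℝ × (Fin d → ℝ) => μ' (ρ q.1 q.2))
    (fun q : ℝ × (Fin d → ℝ) => μ (ρ q.1 q.2))
    (fun i (q : ℝ × (Fin d → ℝ)) => u q.1 q.2 i)
    (1, 0) (fun i => (0, Pi.single i 1))
    hRd hU2 hM2 hmd hMv hcontP (t, x) j
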